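/- arXiv:0804.1695 — 2 statements merged into one kernel-verified Lean document; each statement's English description precedes it below -/
import Mathlib

section
/- For any ψ ∈ [0, 2π) and any x0 ∈ S^3, the curve x(s) = x0 cos s + (cos ψ · I1 x0 + sin ψ · I2 x0) sin s solves the system ẋ = a I1 x + b I2 x with a = cos ψ, b = sin ψ and initial condition x(0) = x0; consequently it is a horizontal curve on S^3 parametrized by arc length. -/
open Matrix

def dot (x y : Fin 4 → ℝ) : ℝ := ∑ i, x i * y i

def I1 : Matrix (Fin 4) (Fin 4) ℝ := !![0,0,-1,0; 0,0,0,-1; 1,0,0,0; 0,1,0,0]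
def I2 : Matrix (Fin 4) (Fin 4) ℝ := !![0,0,0,-1; 0,0,1,0; 0,-1,0,0; 1,0,0,0]
def I3 : Matrix (Fin 4) (Fin 4) ℝ := !![0,-1,0,0; 1,0,0,0; 0,0,0,1; 0,0,-1,0]

lemma I1mv (x : Fin 4 → ℝ) : I1.mulVec x = ![-(x 2), -(x 3), x 0, x 1] := by
  funext i; fin_cases i <;>
    simp [I1, Matrix.mulVec, dotProduct, Fin.sum_univ_four]

lemma I2mv (x : Fin 4 → ℝ) : I2.mulVec x = ![-(x 3), x 2, -(x 1), x 0] := by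
  funext i; fin_cases i <;>
    simp [I2, Matrix.mulVec, dotProduct, Fin.sum_univ_four]

lemma I3mv (x : Fin 4 → ℝ) : I3.mulVec x = ![-(x 1), x 0, x 3, -(x 2)] := by
  funext i; fin_cases i <;>
    simp [I3, Matrix.mulVec, dotProduct, Fin.sum_univ_four]

/-- the curve x(s) = x₀ cos s + (cos ψ I₁x₀ + sin ψ I₂x₀) sin s -/
noncomputable def geo (ψ : ℝ) (x0 : Fin 4 → ℝ) (s : ℝ) : Fin 4 → ℝ :=
  Real.cos s • x0 + Real.sin s • (Real.cos ψ • I1.mulVec x0 + Real.sin ψ • I2.mulVec x0)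

/-- for ψ ∈ [0,2π) and x₀ ∈ S³, the curve geo ψ x₀ solves
ẋ = cos ψ I₁x + sin ψ I₂x with x(0) = x₀; it stays on S³, is horizontal and is
parametrized by arc length. -/
theorem constant_velocity_geodesic (ψ : ℝ) (hψ : ψ ∈ Set.Ico 0 (2 * Real.pi))
    (x0 : Fin 4 → ℝ) (hx0 : dot x0 x0 = 1) :
    geo ψ x0 0 = x0 ∧
    (∀ s, HasDerivAt (geo ψ x0)
      (Real.cos ψ • I1.mulVec (geo ψ x0 s) + Real.sin ψ • I2.mulVec (geo ψ x0 s)) s) ∧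
    (∀ s, dot (geo ψ x0 s) (geo ψ x0 s) = 1) ∧
    (∀ s, dot (Real.cos ψ • I1.mulVec (geo ψ x0 s) + Real.sin ψ • I2.mulVec (geo ψ x0 s))
              (I3.mulVec (geo ψ x0 s)) = 0) ∧
    (∀ s, dot (Real.cos ψ • I1.mulVec (geo ψ x0 s) + Real.sin ψ • I2.mulVec (geo ψ x0 s))
              (Real.cos ψ • I1.mulVec (geo ψ x0 s) + Real.sin ψ • I2.mulVec (geo ψ x0 s)) = 1) := by
  have h3 : ∀ s, dot (geo ψ x0 s) (geo ψ x0 s) = 1 := by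
    intro s
    simp only [dot, Fin.sum_univ_four] at hx0 ⊢
    simp only [geo, I1mv, I2mv, Pi.add_apply, Pi.smul_apply, smul_eq_mul,
      Matrix.cons_val_zero, Matrix.cons_val_one, Matrix.head_cons,
      Matrix.cons_val_two, Matrix.tail_cons, Matrix.cons_val_three]
    linear_combination (Real.cos s^2 + Real.sin s^2*(Real.cos ψ^2+Real.sin ψ^2)) * hx0
      + Real.sin s^2 * Real.sin_sq_add_cos_sq ψ + Real.sin_sq_add_cos_sq s
  refine ⟨?_, ?_, h3, ?_, ?_⟩
  · funext i
    simp [geo]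
  · intro s
    have key : Real.cos ψ • I1.mulVec (geo ψ x0 s) + Real.sin ψ • I2.mulVec (geo ψ x0 s)
        = (-Real.sin s) • x0 +
          Real.cos s • (Real.cos ψ • I1.mulVec x0 + Real.sin ψ • I2.mulVec x0) := by
      funext i
      fin_cases i
      · simp [geo, I1mv, I2mv, Matrix.vecHead, Matrix.vecTail, show (Fin.succ 2 : Fin 4) = 3 from rfl]
        linear_combination (-(Real.sin s * x0 0)) * Real.sin_sq_add_cos_sq ψ
      · simp [geo, I1mv, I2mv, Matrix.vecHead, Matrix.vecTail, show (Fin.succ 2 : Fin 4) = 3 from rfl]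
        linear_combination (-(Real.sin s * x0 1)) * Real.sin_sq_add_cos_sq ψ
      · simp [geo, I1mv, I2mv, Matrix.vecHead, Matrix.vecTail, show (Fin.succ 2 : Fin 4) = 3 from rfl]
        linear_combination (-(Real.sin s * x0 2)) * Real.sin_sq_add_cos_sq ψ
      · simp [geo, I1mv, I2mv, Matrix.vecHead, Matrix.vecTail, show (Fin.succ 2 : Fin 4) = 3 from rfl]
        linear_combination (-(Real.sin s * x0 3)) * Real.sin_sq_add_cos_sq ψ
    rw [key]
    exact ((Real.hasDerivAt_cos s).smul_const x0).add
      ((Real.hasDerivAt_sin s).smul_const (Real.cos ψ • I1.mulVec x0 + Real.sin ψ • I2.mulVec x0))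
  · intro s
    simp only [dot, Fin.sum_univ_four, I1mv, I2mv, I3mv, Pi.add_apply, Pi.smul_apply,
      smul_eq_mul, Matrix.cons_val_zero, Matrix.cons_val_one, Matrix.head_cons,
      Matrix.cons_val_two, Matrix.tail_cons, Matrix.cons_val_three]
    ring
  · intro s
    have h := h3 s
    simp only [dot, Fin.sum_univ_four] at h
    simp only [dot, Fin.sum_univ_four, I1mv, I2mv, Pi.add_apply, Pi.smul_apply,
      smul_eq_mul, Matrix.cons_val_zero, Matrix.cons_val_one, Matrix.head_cons,
      Matrix.cons_val_two, Matrix.tail_cons, Matrix.cons_val_three]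
    linear_combination (Real.cos ψ^2 + Real.sin ψ^2) * h + Real.sin_sq_add_cos_sq ψ
end

section
/- The function p(s) = (C - iD) sin(s√(1+B^2)) / (√(1+B^2) cos(s√(1+B^2)) + iB sin(s√(1+B^2))) solves the complex Riccati equation ṗ = (C+iD) p^2 - 2iB p + (C - iD) with p(0) = 0, where B, C, D ∈ R and C^2 + D^2 = 1. -/
/-- p(s) = (C - iD) sin(s√(1+B²)) / (√(1+B²) cos(s√(1+B²)) + iB sin(s√(1+B²))) -/
noncomputable def pfun (B C D : ℝ) (s : ℝ) : ℂ :=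
  (((C : ℂ) - Complex.I * (D : ℂ)) * (Real.sin (s * Real.sqrt (1 + B^2)) : ℂ))
  / (((Real.sqrt (1 + B^2) : ℝ) : ℂ) * (Real.cos (s * Real.sqrt (1 + B^2)) : ℂ)
      + Complex.I * (B : ℂ) * (Real.sin (s * Real.sqrt (1 + B^2)) : ℂ))

/-!
Write `p = N / Q` with `ω = √(1 + B²)`, `N = (C - iD) sin(ωs)` and `Q = ω cos(ωs) + iB sin(ωs)`.
By the quotient rule, `p` solves `p' = α p² + β p + γ` as soon as the Wronskian `N' Q - N Q'`
equals the homogenized right-hand side `α N² + β N Q + γ Q²`. Here both sides equal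
`(C - iD) ω² (cos² + sin²)(ωs)`, using `(C + iD)(C - iD) = 1` and `ω² = 1 + B²`.
-/

open Complex

theorem HasDerivAt.div_of_riccati {N Q : ℝ → ℂ} {N' Q' α β γ : ℂ} {s : ℝ}
    (hN : HasDerivAt N N' s) (hQ : HasDerivAt Q Q' s) (hQs : Q s ≠ 0)
    (hW : N' * Q s - N s * Q' = α * N s ^ 2 + β * N s * Q s + γ * Q s ^ 2) :
    HasDerivAt (fun t => N t / Q t) (α * (N s / Q s) ^ 2 + β * (N s / Q s) + γ) s := by
  refine (hN.div hQ hQs).congr_deriv ?_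
  field_simp
  linear_combination hW

theorem hasDerivAt_ofReal_sin_mul (ω s : ℝ) :
    HasDerivAt (fun t : ℝ => (Real.sin (t * ω) : ℂ)) (Real.cos (s * ω) * ω) s := by
  simpa using ((hasDerivAt_mul_const ω).sin).ofReal_comp

theorem hasDerivAt_ofReal_cos_mul (ω s : ℝ) :
    HasDerivAt (fun t : ℝ => (Real.cos (t * ω) : ℂ)) (-Real.sin (s * ω) * ω) s := by
  simpa using ((hasDerivAt_mul_const ω).cos).ofReal_comp

theorem riccati_wronskian_identity {a b B w si co : ℂ} (hab : b * a = 1)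
    (hw : w ^ 2 = 1 + B ^ 2) :
    a * (co * w) * (w * co + I * B * si) - a * si * (w * (-si * w) + I * B * (co * w)) =
      b * (a * si) ^ 2 + (-2 * I * B) * (a * si) * (w * co + I * B * si)
        + a * (w * co + I * B * si) ^ 2 := by
  linear_combination (a * si ^ 2) * (hw - hab) + a * si ^ 2 * B ^ 2 * I_sq

/-- p solves the complex Riccati equation
ṗ = (C+iD)p² - 2iBp + (C-iD) with p(0) = 0. -/
theorem riccati_solution (B C D : ℝ) (hCD : C^2 + D^2 = 1) :
    pfun B C D 0 = 0 ∧
    ∀ s : ℝ,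
      (((Real.sqrt (1 + B^2) : ℝ) : ℂ) * (Real.cos (s * Real.sqrt (1 + B^2)) : ℂ)
        + Complex.I * (B : ℂ) * (Real.sin (s * Real.sqrt (1 + B^2)) : ℂ)) ≠ 0 →
      HasDerivAt (pfun B C D)
        (((C : ℂ) + Complex.I * (D : ℂ)) * (pfun B C D s)^2
          - 2 * Complex.I * (B : ℂ) * (pfun B C D s) + ((C : ℂ) - Complex.I * (D : ℂ))) s := by
  refine ⟨by simp [pfun], fun s hQ => ?_⟩
  set ω := √(1 + B ^ 2)
  have hω : (ω : ℂ) ^ 2 = 1 + (B : ℂ) ^ 2 := by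
    rw [← ofReal_pow, Real.sq_sqrt (by positivity)]
    push_cast
    ring
  have hCD' : ((C : ℂ) + I * D) * (C - I * D) = 1 := by
    have hCDc : (C : ℂ) ^ 2 + (D : ℂ) ^ 2 = 1 := by exact_mod_cast hCD
    linear_combination hCDc - D ^ 2 * I_sq
  have hN := (hasDerivAt_ofReal_sin_mul ω s).const_mul ((C : ℂ) - I * D)
  have hQ' : HasDerivAt (fun t : ℝ => (ω : ℂ) * Real.cos (t * ω) + I * B * Real.sin (t * ω))
      _ s :=
    ((hasDerivAt_ofReal_cos_mul ω s).const_mul (ω : ℂ)).add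
      ((hasDerivAt_ofReal_sin_mul ω s).const_mul (I * B))
  exact (hN.div_of_riccati hQ' hQ (riccati_wronskian_identity hCD' hω)).congr_deriv
    (by unfold pfun; ring)
end
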